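/- arXiv:2011.00598 — 11 statements merged into one kernel-verified Lean document; each statement's English description precedes it below -/
import Mathlib

section
/- Let V be a real inner product space, and let r, R be real numbers with 0 < r < R < 1. Let x' be a point of V with ‖x'‖ = R, and let K' = x' + cone{x' − x : x ∈ B_r}. Then for every point x ∈ B_1 \ K' we have ⟨x', x⟩ ≤ r² + √((1 − r²)(R² − r²)). -/
open RealInnerProductSpace

/-- The conic hull of a set `S`: all finite nonnegative linear combinations of elements of `S`. -/
def coneHull {V : Type*} [AddCommMonoid V] [Module ℝ V] (S : Set V) : Set V :=
  {x | ∃ (k : ℕ) (c : Fin k → ℝ) (v : Fin k → V),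
    (∀ i, 0 ≤ c i) ∧ (∀ i, v i ∈ S) ∧ x = ∑ i, c i • v i}

set_option maxHeartbeats 1000000 in
theorem stmt_0 {V : Type*} [NormedAddCommGroup V] [InnerProductSpace ℝ V]
    (r R : ℝ) (hr : 0 < r) (hrR : r < R) (hR1 : R < 1)
    (x' : V) (hx' : ‖x'‖ = R)
    (K' : Set V)
    (hK' : K' = {z | ∃ w ∈ coneHull {d | ∃ x : V, ‖x‖ ≤ r ∧ d = x' - x}, z = x' + w})
    (x : V) (hx1 : ‖x‖ ≤ 1) (hxK : x ∉ K') :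
    ⟪x', x⟫ ≤ r ^ 2 + Real.sqrt ((1 - r ^ 2) * (R ^ 2 - r ^ 2)) := by
  by_contra hcon
  push_neg at hcon
  apply hxK
  rw [hK']
  set w := x - x' with hw
  have hR0 : (0:ℝ) < R := hr.trans hrR
  have ha2 : Real.sqrt (1 - r^2) ^ 2 = 1 - r^2 := Real.sq_sqrt (by nlinarith)
  have hb2 : Real.sqrt (R^2 - r^2) ^ 2 = R^2 - r^2 := Real.sq_sqrt (by nlinarith)
  set a := Real.sqrt (1 - r^2) with hadef
  set b := Real.sqrt (R^2 - r^2) with hbdef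
  have ha0 : 0 ≤ a := Real.sqrt_nonneg _
  have hb0 : 0 ≤ b := Real.sqrt_nonneg _
  have hab : Real.sqrt ((1 - r^2) * (R^2 - r^2)) = a * b := Real.sqrt_mul (by nlinarith) _
  rw [hab] at hcon
  have hbpos : 0 < b := by nlinarith
  have haltb : b < a := by nlinarith
  have hp : r^2 + a*b < ⟪x', x⟫ := hcon
  have hq : ⟪x', w⟫ = ⟪x', x⟫ - R^2 := by
    rw [hw, inner_sub_right, real_inner_self_eq_norm_sq, hx']
  have hqpos : 0 < ⟪x', w⟫ := by rw [hq]; nlinarith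
  have hn : ‖w‖^2 = ‖x‖^2 - 2*⟪x', x⟫ + R^2 := by
    rw [hw, @norm_sub_sq_real, hx', real_inner_comm]
  have hx2 : ‖x‖^2 ≤ 1 := by nlinarith [norm_nonneg x]
  have hab2 : a^2 * b^2 = (1 - r^2) * (R^2 - r^2) := by rw [ha2, hb2]
  have key : (R^2 - r^2) * ‖w‖^2 ≤ ⟪x', w⟫^2 := by
    rw [hq, hn]
    have h1 : (0:ℝ) < ⟪x', x⟫ - r^2 - a*b := by linarith
    have h2 : (0:ℝ) < ⟪x', x⟫ - r^2 + a*b := by nlinarith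
    have hid : (⟪x', x⟫ - R^2)^2 - (R^2 - r^2) * (‖x‖^2 - 2*⟪x', x⟫ + R^2) =
        (⟪x', x⟫ - r^2 - a*b) * (⟪x', x⟫ - r^2 + a*b) + (R^2 - r^2) * (1 - ‖x‖^2) := by
      linear_combination hab2
    nlinarith [mul_pos h1 h2,
      mul_nonneg (show (0:ℝ) ≤ R^2 - r^2 by nlinarith) (show (0:ℝ) ≤ 1 - ‖x‖^2 by linarith)]
  by_cases hw0 : w = 0
  · refine ⟨0, ⟨0, Fin.elim0, Fin.elim0, fun i => i.elim0, fun i => i.elim0, by simp⟩, ?_⟩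
    have : x = x' := by rw [← sub_eq_zero]; exact hw0
    simp [this]
  · have hwpos : 0 < ‖w‖ := norm_pos_iff.2 hw0
    have hnpos : 0 < ‖w‖^2 := by positivity
    set q := ⟪x', w⟫ with hqdef
    set n := ‖w‖^2 with hndef
    refine ⟨w, ⟨1, fun _ => n / q, fun _ => (q / n) • w, fun i => by positivity, ?_, ?_⟩, by rw [hw]; abel⟩
    · intro i
      refine ⟨x' - (q / n) • w, ?_, by abel⟩
      have hy2 : ‖x' - (q / n) • w‖^2 ≤ r^2 := by
        rw [@norm_sub_sq_real, hx', real_inner_smul_right, norm_smul, mul_pow]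
        have habs : |q / n| ^ 2 = (q/n)^2 := sq_abs _
        rw [Real.norm_eq_abs, habs]
        have h1 : R^2 - 2 * (q/n * q) + (q/n)^2 * n = R^2 - q^2/n := by
          field_simp; ring
        rw [h1]
        have : R^2 - r^2 ≤ q^2/n := by
          rw [le_div_iff₀ hnpos]; nlinarith [key]
        linarith
      nlinarith [norm_nonneg (x' - (q / n) • w)]
    · rw [Fin.sum_univ_one, smul_smul]
      have : n / q * (q / n) = 1 := by field_simp
      rw [this, one_smul]
end

section
/- Let V be a finite-dimensional real inner product space, let g_1, …, g_n be a vector-space basis of V, and let L = {y_1 g_1 + ⋯ + y_n g_n : y_1, …, y_n ∈ ℤ} be the lattice generated by this basis. Let θ = max_{i=1,…,n} ‖g_i‖ and let r, R be positive reals with R ≥ r + θn. Then B_r ⊆ conv(B_R ∩ L). -/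
/-!
Write `x = ∑ cᵢ gᵢ`. The point `c` lies in the box `∏ [⌊cᵢ⌋, ⌈cᵢ⌉]`, which is the convex hull
of its integer vertices, so `x` is a convex combination of lattice points `∑ yᵢ gᵢ` with
`|yᵢ - cᵢ| < 1`. Each such point is within `∑ ‖gᵢ‖ ≤ θ n` of `x`, hence in `B_R`.
-/

open Finset

lemma mem_convexHull_pi_floor_ceil {ι : Type*} [Finite ι] (c : ι → ℝ) :
    c ∈ convexHull ℝ (Set.univ.pi fun i => {(⌊c i⌋ : ℝ), (⌈c i⌉ : ℝ)}) :=
  mem_convexHull_pi fun i _ => by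
    rw [convexHull_pair, segment_eq_Icc (mod_cast Int.floor_le_ceil (c i))]
    exact ⟨Int.floor_le _, Int.le_ceil _⟩

lemma exists_int_eq_of_mem_floor_ceil {a z : ℝ} (hz : z ∈ ({(⌊a⌋ : ℝ), (⌈a⌉ : ℝ)} : Set ℝ)) :
    ∃ k : ℤ, z = k ∧ |(k : ℝ) - a| < 1 := by
  rcases hz with rfl | rfl
  · refine ⟨⌊a⌋, rfl, abs_sub_lt_iff.2 ⟨?_, ?_⟩⟩ <;>
      linarith [Int.floor_le a, Int.lt_floor_add_one a]
  · refine ⟨⌈a⌉, rfl, abs_sub_lt_iff.2 ⟨?_, ?_⟩⟩ <;>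
      linarith [Int.le_ceil a, Int.ceil_lt_add_one a]

lemma Module.Basis.mem_convexHull_integer_roundings {ι E : Type*} [Fintype ι] [AddCommGroup E]
    [Module ℝ E] (b : Module.Basis ι ℝ E) (x : E) :
    x ∈ convexHull ℝ
      {v | ∃ y : ι → ℤ, v = ∑ i, (y i : ℝ) • b i ∧ ∀ i, |(y i : ℝ) - b.repr x i| < 1} := by
  have hx : x ∈ b.equivFun.symm.toLinearMap '' convexHull ℝ
      (Set.univ.pi fun i => {(⌊b.repr x i⌋ : ℝ), (⌈b.repr x i⌉ : ℝ)}) :=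
    ⟨_, mem_convexHull_pi_floor_ceil _, b.equivFun.symm_apply_apply x⟩
  rw [LinearMap.image_convexHull b.equivFun.symm.toLinearMap] at hx
  refine convexHull_mono ?_ hx
  rintro _ ⟨z, hz, rfl⟩
  choose y hzy hy using fun i => exists_int_eq_of_mem_floor_ceil (hz i (Set.mem_univ i))
  refine ⟨y, ?_, hy⟩
  simp [Module.Basis.equivFun_symm_apply, hzy]

lemma norm_sum_smul_sub_sum_smul_le {ι E : Type*} [SeminormedAddCommGroup E] [NormedSpace ℝ E]
    (s : Finset ι) (y c : ι → ℝ) (v : ι → E) :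
    ‖∑ i ∈ s, y i • v i - ∑ i ∈ s, c i • v i‖ ≤ ∑ i ∈ s, |y i - c i| * ‖v i‖ := by
  rw [← sum_sub_distrib]
  refine (norm_sum_le _ _).trans (le_of_eq (sum_congr rfl fun i _ => ?_))
  rw [← sub_smul, norm_smul, Real.norm_eq_abs]

theorem stmt_3_general {V : Type*} [NormedAddCommGroup V] [InnerProductSpace ℝ V] {n : ℕ}
    (g : Module.Basis (Fin n) ℝ V)
    (L : Set V) (hL : L = {v | ∃ y : Fin n → ℤ, v = ∑ i, (y i : ℝ) • g i})
    (θ : ℝ) (hθ : IsGreatest (Set.range fun i => ‖g i‖) θ)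
    (r R : ℝ) (hRr : R ≥ r + θ * n) :
    Metric.closedBall (0 : V) r ⊆ convexHull ℝ (Metric.closedBall (0 : V) R ∩ L) := by
  intro x hx
  refine convexHull_mono ?_ (g.mem_convexHull_integer_roundings x)
  rintro _ ⟨y, rfl, hy⟩
  refine ⟨?_, hL ▸ ⟨y, rfl⟩⟩
  have hdist : ‖∑ i, (y i : ℝ) • g i - x‖ ≤ θ * n := calc
    _ = ‖∑ i, (y i : ℝ) • g i - ∑ i, g.repr x i • g i‖ := by rw [g.sum_repr]
    _ ≤ ∑ i, |(y i : ℝ) - g.repr x i| * ‖g i‖ := norm_sum_smul_sub_sum_smul_le _ _ _ _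
    _ ≤ ∑ _i : Fin n, θ := sum_le_sum fun i _ =>
      (mul_le_of_le_one_left (norm_nonneg _) (hy i).le).trans (hθ.2 ⟨i, rfl⟩)
    _ = θ * n := by simp [mul_comm]
  rw [mem_closedBall_zero_iff] at hx ⊢
  linarith [norm_le_insert' (∑ i, (y i : ℝ) • g i) x]

theorem stmt_3 {V : Type*} [NormedAddCommGroup V] [InnerProductSpace ℝ V] {n : ℕ}
    (g : Module.Basis (Fin n) ℝ V)
    (L : Set V) (hL : L = {v | ∃ y : Fin n → ℤ, v = ∑ i, (y i : ℝ) • g i})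
    (θ : ℝ) (hθ : IsGreatest (Set.range fun i => ‖g i‖) θ)
    (r R : ℝ) (hr : 0 < r) (hR : 0 < R) (hRr : R ≥ r + θ * n) :
    Metric.closedBall (0 : V) r ⊆ convexHull ℝ (Metric.closedBall (0 : V) R ∩ L) :=
  stmt_3_general g L hL θ hθ r R hRr
end

section
/- Let n ≥ 1 be an integer and set β = 1/(n+1), σ = 2β³/(27n), R = β/3 and r = R√(1 − β²)/√(1 − 2βR + R²). Then R ≥ r + σn. -/
theorem stmt_4 (n : ℕ) (hn : 1 ≤ n) (β σ R r : ℝ)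
    (hβ : β = 1 / ((n : ℝ) + 1))
    (hσ : σ = 2 * β ^ 3 / (27 * (n : ℝ)))
    (hR : R = β / 3)
    (hr : r = R * Real.sqrt (1 - β ^ 2) / Real.sqrt (1 - 2 * β * R + R ^ 2)) :
    R ≥ r + σ * (n : ℝ) := by
  have hn1 : (1:ℝ) ≤ n := by exact_mod_cast hn
  have hβpos : 0 < β := by rw [hβ]; positivity
  have hβle : β ≤ 1/2 := by
    rw [hβ, div_le_div_iff₀ (by linarith) (by norm_num)]; linarith
  have hD : 1 - 2*β*R + R^2 = 1 - 5*β^2/9 := by rw [hR]; ring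
  have hDpos : (0:ℝ) < 1 - 2*β*R + R^2 := by rw [hD]; nlinarith
  have hkey : Real.sqrt (1 - β^2) ≤ (9 - 2*β^2)/9 * Real.sqrt (1 - 2*β*R + R^2) := by
    have h9 : (0:ℝ) ≤ (9 - 2*β^2)/9 := by nlinarith
    rw [show (9 - 2*β^2)/9 * Real.sqrt (1 - 2*β*R + R^2)
        = Real.sqrt (((9-2*β^2)/9)^2 * (1 - 2*β*R + R^2)) from ?_]
    · apply Real.sqrt_le_sqrt
      rw [hD]
      nlinarith [sq_nonneg β, sq_nonneg (β^2), mul_le_mul hβle hβle hβpos.le (by norm_num : (0:ℝ) ≤ 1/2), sq_nonneg (β^3)]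
    · rw [Real.sqrt_mul (by positivity), Real.sqrt_sq h9]
  have hn0 : (n:ℝ) ≠ 0 := by linarith
  have hσn : σ * n = 2*β^3/27 := by rw [hσ]; field_simp
  have hRpos : 0 < R := by rw [hR]; linarith
  have hrle : r ≤ R * ((9 - 2*β^2)/9) := by
    rw [hr, div_le_iff₀ (Real.sqrt_pos.mpr hDpos)]
    calc R * Real.sqrt (1-β^2)
        ≤ R * ((9-2*β^2)/9 * Real.sqrt (1-2*β*R+R^2)) :=
          mul_le_mul_of_nonneg_left hkey hRpos.le
      _ = R * ((9-2*β^2)/9) * Real.sqrt (1-2*β*R+R^2) := by ring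
  have hfin : R * ((9-2*β^2)/9) = R - σ * n := by rw [hR, hσn]; ring
  linarith
end

section
/- Let β be a real number with 0 < β ≤ 1/2, and set R = β/3 and r = β√(1 − β²)/√(9 − 5β²). Then R − r = 4β³ / (3·√(9 − 5β²)·(√(9 − 5β²) + 3√(1 − β²))) and R − r ≥ 2β³/27. -/
theorem stmt_5 (β : ℝ) (hβ0 : 0 < β) (hβ : β ≤ 1 / 2) (R r : ℝ)
    (hR : R = β / 3)
    (hr : r = β * Real.sqrt (1 - β ^ 2) / Real.sqrt (9 - 5 * β ^ 2)) :
    R - r = 4 * β ^ 3 /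
        (3 * Real.sqrt (9 - 5 * β ^ 2) *
          (Real.sqrt (9 - 5 * β ^ 2) + 3 * Real.sqrt (1 - β ^ 2))) ∧
    R - r ≥ 2 * β ^ 3 / 27 := by
  have hb2 : β ^ 2 ≤ 1 / 4 := by nlinarith
  set s := Real.sqrt (9 - 5 * β ^ 2) with hsdef
  set t := Real.sqrt (1 - β ^ 2) with htdef
  have hs2 : s ^ 2 = 9 - 5 * β ^ 2 := Real.sq_sqrt (by nlinarith)
  have ht2 : t ^ 2 = 1 - β ^ 2 := Real.sq_sqrt (by nlinarith)
  have hspos : 0 < s := Real.sqrt_pos.mpr (by nlinarith)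
  have htpos : 0 < t := Real.sqrt_pos.mpr (by nlinarith)
  have hs3 : s ≤ 3 := by nlinarith
  have ht1 : t ≤ 1 := by nlinarith
  have hden : 0 < 3 * s * (s + 3 * t) := by positivity
  have heq : R - r = 4 * β ^ 3 / (3 * s * (s + 3 * t)) := by
    rw [hR, hr]
    rw [div_sub_div _ _ (by norm_num) (ne_of_gt hspos), div_eq_div_iff (by positivity) (ne_of_gt hden)]
    linear_combination 3 * s * β * hs2 - 27 * s * β * ht2
  refine ⟨heq, ?_⟩
  rw [heq, ge_iff_le, div_le_div_iff₀ (by norm_num) hden]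
  have hst : s * t ≤ 3 := by nlinarith
  nlinarith [pow_pos hβ0 3, hst, hs2]
end

section
/- Let V be a real inner product space, let r > 0, let x* ∈ V, and let t ≥ 1 be a real number. Set x' = t·x*. Then x' + cone{x' − x : x ∈ B_r} ⊆ x* + cone{x* − x : x ∈ B_r}. -/
theorem stmt_7 {V : Type*} [NormedAddCommGroup V] [InnerProductSpace ℝ V]
    (r : ℝ) (hr : 0 < r) (xstar : V) (t : ℝ) (ht : 1 ≤ t)
    (x' : V) (hx' : x' = t • xstar) :
    {z | ∃ w ∈ coneHull {d | ∃ u : V, ‖u‖ ≤ r ∧ d = x' - u}, z = x' + w} ⊆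
      {z | ∃ w ∈ coneHull {d | ∃ u : V, ‖u‖ ≤ r ∧ d = xstar - u}, z = xstar + w} := by
  have ht0 : (0 : ℝ) < t := lt_of_lt_of_le one_pos ht
  rintro z ⟨w, ⟨k, c, v, hc, hv, hw⟩, hz⟩
  choose u hu hvu using hv
  refine ⟨(t - 1) • xstar + w,
    ⟨k + 1, Fin.cons (t - 1) (fun i => t * c i),
      Fin.cons xstar (fun i => xstar - t⁻¹ • u i), ?_, ?_, ?_⟩, ?_⟩
  · intro i
    refine Fin.cases ?_ (fun j => ?_) i
    · simp [sub_nonneg.mpr ht]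
    · simpa using mul_nonneg (le_of_lt ht0) (hc j)
  · intro i
    refine Fin.cases ?_ (fun j => ?_) i
    · exact ⟨0, by simp [hr.le], by simp⟩
    · refine ⟨t⁻¹ • u j, ?_, by simp⟩
      rw [norm_smul]
      calc ‖t⁻¹‖ * ‖u j‖ ≤ 1 * ‖u j‖ := by
            apply mul_le_mul_of_nonneg_right _ (norm_nonneg _)
            rw [Real.norm_eq_abs, abs_of_pos (inv_pos.mpr ht0)]
            exact inv_le_one_of_one_le₀ ht
        _ ≤ r := by simpa using hu j
  · rw [Fin.sum_univ_succ, hw]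
    simp only [Fin.cons_zero, Fin.cons_succ]
    congr 1
    apply Finset.sum_congr rfl
    intro j _
    rw [hvu j, hx']
    match_scalars <;> field_simp <;> ring
  · rw [hz, hx']
    rw [sub_smul, one_smul]
    abel
end

section
/- Every convex function f : ℝⁿ → ℝ is convic. -/
/-- A function `f` is convic if for all `y, z` with
`z ∈ y + cone {y - x : f x ≤ f y}` it holds that `f y ≤ f z`. -/
def Convic {V : Type*} [AddCommGroup V] [Module ℝ V] (f : V → ℝ) : Prop :=
  ∀ y z : V, (∃ w ∈ coneHull {d | ∃ x : V, f x ≤ f y ∧ d = y - x}, z = y + w) → f y ≤ f z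

theorem stmt_10 {n : ℕ} (f : (Fin n → ℝ) → ℝ)
    (hconvex : ∀ x y : Fin n → ℝ, ∀ l : ℝ, 0 ≤ l → l ≤ 1 →
      f (l • x + (1 - l) • y) ≤ l * f x + (1 - l) * f y) :
    Convic f := by
  have hf : ConvexOn ℝ Set.univ f := by
    refine ⟨convex_univ, fun x _ y _ a b ha hb hab => ?_⟩
    have hb' : b = 1 - a := by linarith
    have := hconvex x y a ha (by linarith)
    simpa [hb'] using this
  rintro y z ⟨w, ⟨k, c, v, hc, hv, hw⟩, rfl⟩
  choose x hx hxv using hv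
  set s : ℝ := ∑ i, c i with hs
  by_cases hs0 : s = 0
  · have hall : ∀ i, c i = 0 := fun i =>
      (Finset.sum_eq_zero_iff_of_nonneg (fun i _ => hc i)).mp hs0 i (Finset.mem_univ i)
    have hw0 : w = 0 := by simp [hw, hall]
    simp [hw0]
  · have hspos : 0 < s := lt_of_le_of_ne (Finset.sum_nonneg fun i _ => hc i) (Ne.symm hs0)
    set l : ℝ := s / (1 + s) with hl
    have h1s : (0:ℝ) < 1 + s := by linarith
    have hl0 : 0 ≤ l := div_nonneg hspos.le h1s.le
    have hl1 : l < 1 := by rw [hl, div_lt_one h1s]; linarith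
    have hsum1 : ∑ i, c i / s = 1 := by rw [← Finset.sum_div, ← hs]; field_simp
    set xb : (Fin n → ℝ) := ∑ i, (c i / s) • x i with hxbdef
    have hjensen : f xb ≤ ∑ i, (c i / s) * f (x i) :=
      hf.map_sum_le (fun i _ => div_nonneg (hc i) hspos.le) hsum1 (fun i _ => Set.mem_univ _)
    have hfxb : f xb ≤ f y := by
      calc f xb ≤ ∑ i, (c i / s) * f (x i) := hjensen
        _ ≤ ∑ i, (c i / s) * f y := Finset.sum_le_sum fun i _ =>
            mul_le_mul_of_nonneg_left (hx i) (div_nonneg (hc i) hspos.le)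
        _ = f y := by rw [← Finset.sum_mul, hsum1, one_mul]
    have hxb : xb = y - s⁻¹ • w := by
      rw [hxbdef, hw]
      calc ∑ i, (c i / s) • x i
          = ∑ i, ((c i / s) • y - s⁻¹ • (c i • v i)) := by
            refine Finset.sum_congr rfl fun i _ => ?_
            have hxi : x i = y - v i := by rw [hxv i]; abel
            rw [hxi, smul_sub, smul_smul]
            congr 2
            field_simp
        _ = (∑ i, (c i / s) • y) - s⁻¹ • ∑ i, c i • v i := by
            rw [Finset.sum_sub_distrib, Finset.smul_sum]
        _ = y - s⁻¹ • ∑ i, c i • v i := by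
            rw [← Finset.sum_smul, hsum1, one_smul]
    have hls : l * s⁻¹ = 1 - l := by
      rw [hl]; field_simp; ring
    have hkey : l • xb + (1 - l) • (y + w) = y := by
      rw [hxb, smul_sub, smul_add, smul_smul, hls]
      have : l • y + (1 - l) • y = y := by rw [← add_smul]; simp
      rw [add_comm (l • y - (1 - l) • w)]
      abel_nf
      rw [← add_smul]
      simp
    have hmain := hconvex xb (y + w) l hl0 hl1.le
    rw [hkey] at hmain
    nlinarith
end

section
/- Every strictly quasiconvex function f : ℝⁿ → ℝ is convic. -/
theorem stmt_11 {n : ℕ} (f : (Fin n → ℝ) → ℝ)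
    (hsqc : ∀ x y : Fin n → ℝ, x ≠ y → ∀ l : ℝ, 0 < l → l < 1 →
      f (l • x + (1 - l) • y) < max (f x) (f y)) :
    Convic f := by
  have hqc : ∀ r : ℝ, Convex ℝ {x : Fin n → ℝ | f x ≤ r} := by
    intro r a ha b hb α β hα hβ hαβ
    rcases eq_or_ne a b with rfl | hne
    · simpa [← add_smul, hαβ] using ha
    · rcases hα.eq_or_lt with rfl | hα'
      · simpa [show β = 1 by linarith] using hb
      · rcases hβ.eq_or_lt with rfl | hβ'
        · simpa [show α = 1 by linarith] using ha
        · have h := hsqc a b hne α hα' (by linarith)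
          have hβα : β = 1 - α := by linarith
          subst hβα
          exact le_trans h.le (max_le ha hb)
  intro y z hz
  obtain ⟨w, ⟨k, c, v, hc, hv, hw⟩, hz⟩ := hz
  choose x hxle hxv using hv
  set t := ∑ i, c i with ht
  have ht0 : 0 ≤ t := Finset.sum_nonneg fun i _ => hc i
  rcases ht0.eq_or_lt with ht0 | ht0
  · have hall : ∀ i ∈ Finset.univ, c i = 0 :=
      (Finset.sum_eq_zero_iff_of_nonneg fun i _ => hc i).1 ht0.symm
    have hw0 : w = 0 := by
      rw [hw]
      exact Finset.sum_eq_zero fun i hi => by rw [hall i hi, zero_smul]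
    simp [hz, hw0]
  · set xb := t⁻¹ • ∑ i, c i • x i with hxb
    have hfxb : f xb ≤ f y := by
      have hx' : xb = ∑ i, (c i / t) • x i := by
        rw [hxb, Finset.smul_sum]
        refine Finset.sum_congr rfl fun i _ => ?_
        rw [smul_smul]
        ring_nf
      rw [hx']
      exact (hqc (f y)).sum_mem (fun i _ => div_nonneg (hc i) ht0.le)
        (by rw [← Finset.sum_div, ← ht]; field_simp) (fun i _ => hxle i)
    have hwt : w = t • (y - xb) := by
      rw [hw]
      simp only [hxv, smul_sub]
      rw [Finset.sum_sub_distrib, ← Finset.sum_smul, ← ht]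
      congr 1
      rw [hxb, smul_smul, mul_inv_cancel₀ ht0.ne', one_smul]
    have ht1 : (1 : ℝ) + t ≠ 0 := by positivity
    rcases eq_or_ne z xb with heq | hne
    · have hz' : xb = y + t • (y - xb) := by rw [hwt] at hz; rw [heq] at hz; exact hz
      have h4 : xb - y = t • (y - xb) := sub_eq_of_eq_add' hz'
      have h5 : (1 + t) • (xb - y) = 0 := by
        have h6 : (1 + t) • (xb - y) = (xb - y) - t • (y - xb) := by module
        rw [h6, h4, sub_self]
      rcases smul_eq_zero.mp h5 with h | h
      · exact absurd h ht1
      · have hxy : xb = y := by rwa [sub_eq_zero] at h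
        rw [heq, hxy]
    · have hl0 : (0:ℝ) < (1+t)⁻¹ := by positivity
      have hl1 : (1+t)⁻¹ < 1 := by
        rw [inv_lt_one_iff₀]; right; linarith
      have hy : y = (1+t)⁻¹ • z + (1 - (1+t)⁻¹) • xb := by
        rw [hz, hwt]
        match_scalars <;> field_simp <;> ring
      have h := hsqc z xb hne (1+t)⁻¹ hl0 hl1
      rw [← hy] at h
      by_contra hlt
      push_neg at hlt
      exact absurd h (not_lt.2 (max_le hlt.le hfxb))
end

section
/- Every convic function f : ℝⁿ → ℝ is quasiconvex, i.e., for every c ∈ ℝ the sublevel set {x ∈ ℝⁿ : f(x) ≤ c} is convex. -/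
theorem stmt_12 {n : ℕ} (f : (Fin n → ℝ) → ℝ) (hf : Convic f) (c : ℝ) :
    Convex ℝ {x : Fin n → ℝ | f x ≤ c} := by
  intro x hx y hy a b ha hb hab
  simp only [Set.mem_setOf_eq] at hx hy ⊢
  set z := a • x + b • y with hz
  by_contra hzc
  push_neg at hzc
  rcases eq_or_lt_of_le hb with hb0 | hb0
  · have : a = 1 := by linarith
    have : z = x := by simp [hz, ← hb0, this]
    rw [this] at hzc; linarith
  · have hfx : f x ≤ f z := by linarith
    have key : f z ≤ f y := by
      apply hf z y
      refine ⟨(a / b) • (z - x), ⟨1, fun _ => a / b, fun _ => z - x,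
        fun _ => div_nonneg ha hb, fun _ => ⟨x, hfx, rfl⟩, by simp⟩, ?_⟩
      have : b • y = b • (z + (a / b) • (z - x)) := by
        rw [smul_add, smul_smul, mul_div_cancel₀ _ hb0.ne', hz]
        have ha' : a = 1 - b := by linarith
        rw [ha']
        module
      exact smul_right_injective (Fin n → ℝ) hb0.ne' this
    linarith
end

section
/- If f : ℝⁿ → ℝ and g : ℝⁿ → ℝ are convic functions, then the function h : ℝⁿ → ℝ defined by h(x) = max{f(x), g(x)} is convic. -/
lemma coneHull_mono {V : Type*} [AddCommMonoid V] [Module ℝ V] {S T : Set V} (h : S ⊆ T) :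
    coneHull S ⊆ coneHull T := by
  rintro x ⟨k, c, v, hc, hv, hx⟩
  exact ⟨k, c, v, hc, fun i => h (hv i), hx⟩

theorem stmt_13 {n : ℕ} (f g : (Fin n → ℝ) → ℝ) (hf : Convic f) (hg : Convic g) :
    Convic (fun x => max (f x) (g x)) := by
  intro y z ⟨w, hw, hz⟩
  simp only at hw ⊢
  rcases le_total (g y) (f y) with hle | hle
  · have hm : max (f y) (g y) = f y := max_eq_left hle
    have : f y ≤ f z := by
      apply hf y z
      refine ⟨w, ?_, hz⟩
      apply coneHull_mono ?_ hw
      rintro d ⟨x, hx, rfl⟩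
      exact ⟨x, le_trans (le_max_left _ _) (hm ▸ hx), rfl⟩
    rw [hm]
    exact this.trans (le_max_left _ _)
  · have hm : max (f y) (g y) = g y := max_eq_right hle
    have : g y ≤ g z := by
      apply hg y z
      refine ⟨w, ?_, hz⟩
      apply coneHull_mono ?_ hw
      rintro d ⟨x, hx, rfl⟩
      exact ⟨x, le_trans (le_max_right _ _) (hm ▸ hx), rfl⟩
    rw [hm]
    exact this.trans (le_max_right _ _)
end

section
/- If f : ℝ → ℝ is a non-decreasing convic function and g : ℝⁿ → ℝ is convic, then the composition x ↦ f(g(x)) is a convic function on ℝⁿ. -/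
/-- If `f` is convic and non-decreasing, and `f b ≤ f a` for some `b > a`, then `f a` is a
global minimum of `f`. -/
lemma convic_min (f : ℝ → ℝ) (hf : Convic f) (hmono : ∀ s t : ℝ, s ≤ t → f s ≤ f t)
    (a b : ℝ) (hab : a < b) (hba : f b ≤ f a) : ∀ t : ℝ, f a ≤ f t := by
  intro t
  rcases le_or_gt a t with h | h
  · exact hmono _ _ h
  · apply hf a t
    refine ⟨t - a, ⟨1, fun _ => (a - t) / (b - a), fun _ => a - b, ?_, ?_, ?_⟩, by ring⟩
    · intro i
      apply div_nonneg <;> linarith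
    · intro i
      exact ⟨b, hba, rfl⟩
    · rw [Fin.sum_univ_one, smul_eq_mul]
      have hne : b - a ≠ 0 := by linarith
      field_simp
      ring

theorem stmt_14 {n : ℕ} (f : ℝ → ℝ) (hf : Convic f) (hmono : ∀ s t : ℝ, s ≤ t → f s ≤ f t)
    (g : (Fin n → ℝ) → ℝ) (hg : Convic g) :
    Convic (fun x => f (g x)) := by
  rintro y z ⟨w, ⟨k, c, v, hc, hv, hw⟩, hz⟩
  simp only [Set.mem_setOf_eq] at hv
  choose x hx hvx using hv
  by_cases hT : ∃ i, g y < g (x i)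
  · obtain ⟨i, hi⟩ := hT
    exact convic_min f hf hmono (g y) (g (x i)) hi (hx i) (g z)
  · push_neg at hT
    have hgy : g y ≤ g z := by
      apply hg y z
      exact ⟨w, ⟨k, c, v, hc, fun i => ⟨x i, hT i, hvx i⟩, hw⟩, hz⟩
    exact hmono _ _ hgy
end

section
/- Let f : ℝⁿ → ℝ be a convic function and let T : ℝⁿ → ℝⁿ be an invertible affine map, T(x) = Mx + b with M an invertible real n×n matrix and b ∈ ℝⁿ. Then the function x ↦ f(T(x)) is convic. -/
open Matrix in
theorem stmt_15 {n : ℕ} (f : (Fin n → ℝ) → ℝ) (hf : Convic f)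
    (M : Matrix (Fin n) (Fin n) ℝ) (hM : IsUnit M) (b : Fin n → ℝ) :
    Convic (fun x => f (M *ᵥ x + b)) := by
  rintro y z ⟨w, ⟨k, c, v, hc, hv, hw⟩, rfl⟩
  apply hf (M *ᵥ y + b) (M *ᵥ (y + w) + b)
  refine ⟨M *ᵥ w, ⟨k, c, fun i => M *ᵥ (v i), hc, ?_, ?_⟩, ?_⟩
  · intro i
    obtain ⟨x, hx, hvx⟩ := hv i
    refine ⟨M *ᵥ x + b, hx, ?_⟩
    show M *ᵥ v i = _
    rw [hvx, Matrix.mulVec_sub]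
    abel
  · rw [hw]
    simp only [← M.mulVecLin_apply, map_sum, _root_.map_smul]
  · rw [Matrix.mulVec_add]
    abel
end
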